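/- For every reachable CHR^rp state σ of the translated program T(P): if σ →_{T(P)} σ' under ω_p, then either chrToLa(σ) = chrToLa(σ') or chrToLa(σ) →_P chrToLa(σ') is a Logical Algorithms transition of the original program P. -/

import Mathlib

namespace LA2CHR

/-- Mode indicators: positively asserted (`p`), negatively asserted (`n`), or both (`b`). -/
inductive Mode : Type
  | p | n | b
deriving DecidableEq

/-- CHR constraints of the translated program `T(P)`: for each ground user-defined
LA atom `a`, `raw a` is the CHR constraint `a(X̄)`, `rawDel a` is `del(a(X̄))`, and
`rep a m` is the representation constraint `a_r(X̄, m)` with mode indicator `m`. -/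
inductive TC (α : Type) : Type
  | raw : α → TC α
  | rawDel : α → TC α
  | rep : α → Mode → TC α
deriving DecidableEq

/-- Ground Logical Algorithms assertions: positive (`pos a` is `a`) or
negative (`del a` is `del(a)`). -/
inductive LAAtom (α : Type) : Type
  | pos : α → LAAtom α
  | del : α → LAAtom α
deriving DecidableEq

/-- A ground instance of a Logical Algorithms rule, with the comparison antecedents
already evaluated away: a ground instance belongs to the program iff its comparisons
are true.  `posA` are the (distinct) positive user-defined ground antecedents, `negA`
the atoms of the negative (`del`) antecedents, `concl` the instantiated conclusion and
`prio` the instantiated rule priority. -/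
structure Inst (α : Type) where
  prio : ℕ
  posA : Finset α
  negA : Finset α
  concl : Finset (LAAtom α)

variable {α : Type}

/-- Applicability of a ground rule instance of `P` in an LA state
(the priority condition is not included). -/
def LAApplicable (P : Set (Inst α)) (σ : Set (LAAtom α)) (ι : Inst α) : Prop :=
  ι ∈ P ∧ (∀ a ∈ ι.posA, LAAtom.pos a ∈ σ ∧ LAAtom.del a ∉ σ) ∧
    (∀ a ∈ ι.negA, LAAtom.del a ∈ σ) ∧ ¬ ↑ι.concl ⊆ σ

/-- The `Apply` transition of Logical Algorithms: a highest-priority applicable ground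
rule instance whose conclusion is not yet contained in the state fires. -/
def LAStep (P : Set (Inst α)) (σ σ' : Set (LAAtom α)) : Prop :=
  ∃ ι, LAApplicable P σ ι ∧ σ' = σ ∪ ↑ι.concl ∧
    ∀ ι', LAApplicable P σ ι' → ι.prio ≤ ι'.prio

/-- Names of the rules of the translated CHR^rp program `T(P)`: the six
set/deletion-semantics rule schemas (for all user-defined predicates at once,
instantiated per ground atom), and one propagation rule per ground LA rule instance
(the ground collapse of the rules `r_ρ`). -/
inductive RuleTag (α : Type) : Type
  | keepPos | mergePos | newPos | keepNeg | mergeNeg | newNeg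
  | inst : Inst α → RuleTag α

/-- Rule priorities of `T(P)`: the update rules have priority 1, the rules creating a
fresh representation have priority 2, and the translation of an LA rule of priority
`p` has priority `p + 2`. -/
def RuleTag.prio : RuleTag α → ℕ
  | .keepPos => 1
  | .mergePos => 1
  | .keepNeg => 1
  | .mergeNeg => 1
  | .newPos => 2
  | .newNeg => 2
  | .inst ι => ι.prio + 2

/-- CHR^rp execution states `⟨G, S, true, T⟩_n`: goal, CHR constraint store of
identified constraints, propagation history (recording a rule together with the set of
identified constraints it fired on) and next free identifier.  As the translated
program has no built-in tell constraints, the built-in store is always `true` and is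
omitted. -/
structure CState (α : Type) where
  goal : Multiset (TC α)
  store : Set (TC α × ℕ)
  hist : Set (RuleTag α × Set (TC α × ℕ))
  next : ℕ

/-- Conclusion atoms as CHR constraints. -/
def toTC : LAAtom α → TC α
  | .pos a => .raw a
  | .del a => .rawDel a

/-- `Fires P χ t H R B`: rule `t` of `T(P)` has an instance in state `χ` matching the
set `H` of identified stored head constraints, of which the ones in `R` are removed,
with instantiated body `B`.  This comprises all conditions of the ω_p `Apply`
transition except the empty-goal, propagation-history and priority conditions. -/
inductive Fires (P : Set (Inst α)) (χ : CState α) :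
    RuleTag α → Set (TC α × ℕ) → Set (TC α × ℕ) → Multiset (TC α) → Prop
  | keepPos (a : α) (m : Mode) (i j : ℕ) : m ≠ Mode.n →
      (TC.rep a m, i) ∈ χ.store → (TC.raw a, j) ∈ χ.store →
      Fires P χ .keepPos {(TC.rep a m, i), (TC.raw a, j)} {(TC.raw a, j)} 0
  | mergePos (a : α) (i j : ℕ) :
      (TC.rep a Mode.n, i) ∈ χ.store → (TC.raw a, j) ∈ χ.store →
      Fires P χ .mergePos {(TC.rep a Mode.n, i), (TC.raw a, j)}
        {(TC.rep a Mode.n, i), (TC.raw a, j)} {TC.rep a Mode.b}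
  | newPos (a : α) (j : ℕ) : (TC.raw a, j) ∈ χ.store →
      Fires P χ .newPos {(TC.raw a, j)} {(TC.raw a, j)} {TC.rep a Mode.p}
  | keepNeg (a : α) (m : Mode) (i j : ℕ) : m ≠ Mode.p →
      (TC.rep a m, i) ∈ χ.store → (TC.rawDel a, j) ∈ χ.store →
      Fires P χ .keepNeg {(TC.rep a m, i), (TC.rawDel a, j)} {(TC.rawDel a, j)} 0
  | mergeNeg (a : α) (i j : ℕ) :
      (TC.rep a Mode.p, i) ∈ χ.store → (TC.rawDel a, j) ∈ χ.store →
      Fires P χ .mergeNeg {(TC.rep a Mode.p, i), (TC.rawDel a, j)}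
        {(TC.rep a Mode.p, i), (TC.rawDel a, j)} {TC.rep a Mode.b}
  | newNeg (a : α) (j : ℕ) : (TC.rawDel a, j) ∈ χ.store →
      Fires P χ .newNeg {(TC.rawDel a, j)} {(TC.rawDel a, j)} {TC.rep a Mode.n}
  | inst (ι : Inst α) (fp fn : α → ℕ) (fm : α → Mode) : ι ∈ P →
      (∀ a ∈ ι.posA, (TC.rep a Mode.p, fp a) ∈ χ.store) →
      (∀ a ∈ ι.negA, fm a ≠ Mode.p ∧ (TC.rep a (fm a), fn a) ∈ χ.store) →
      Fires P χ (.inst ι)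
        ((fun a => (TC.rep a Mode.p, fp a)) '' ↑ι.posA ∪
          (fun a => (TC.rep a (fm a), fn a)) '' ↑ι.negA)
        ∅ (Multiset.map toTC ι.concl.val)

/-- Transition labels: `Introduce`, or `Apply` of a given rule of `T(P)`. -/
inductive Lab (α : Type) : Type
  | intro : Lab α
  | apply : RuleTag α → Lab α

variable [DecidableEq α]

/-- The transitions of the priority semantics ω_p for the translated program `T(P)`:
`Introduce` moves a constraint from the goal to the store with a fresh identifier;
`Apply` (possible only when the goal is empty) fires an instance of a rule whose
history tuple is not yet recorded and such that no fireable rule instance has a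
strictly higher priority. -/
inductive Step (P : Set (Inst α)) : CState α → Lab α → CState α → Prop
  | intro (χ : CState α) (c : TC α) : c ∈ χ.goal →
      Step P χ .intro ⟨χ.goal.erase c, insert (c, χ.next) χ.store, χ.hist, χ.next + 1⟩
  | apply (χ : CState α) (t : RuleTag α) (H R : Set (TC α × ℕ)) (B : Multiset (TC α)) :
      χ.goal = 0 → Fires P χ t H R B → (t, H) ∉ χ.hist →
      (∀ t' H' R' B', Fires P χ t' H' R' B' → (t', H') ∉ χ.hist →
        RuleTag.prio t ≤ RuleTag.prio t') →
      Step P χ (.apply t) ⟨B, χ.store \ R, insert (t, H) χ.hist, χ.next⟩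

/-- Some ω_p transition. -/
def StepAny (P : Set (Inst α)) (χ χ' : CState α) : Prop := ∃ l, Step P χ l χ'

/-- An ω_p transition that is an `Introduce` or fires a rule of priority 1 or 2. -/
def Step2 (P : Set (Inst α)) (χ χ' : CState α) : Prop :=
  ∃ l, Step P χ l χ' ∧ ∀ t, l = Lab.apply t → RuleTag.prio t ≤ 2

/-- Membership in `A = G ∪ chr(S)`. -/
def memA (χ : CState α) (c : TC α) : Prop := c ∈ χ.goal ∨ ∃ i, (c, i) ∈ χ.store

/-- The mapping from (reachable) CHR^rp execution states of `T(P)` to LA states. -/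
def chrToLa (χ : CState α) : Set (LAAtom α) :=
  {x | (∃ a, x = LAAtom.pos a ∧
          (memA χ (TC.raw a) ∨ ∃ m, m ≠ Mode.n ∧ memA χ (TC.rep a m))) ∨
       (∃ a, x = LAAtom.del a ∧
          (memA χ (TC.rawDel a) ∨ ∃ m, m ≠ Mode.p ∧ memA χ (TC.rep a m)))}

/-- Initial states `⟨G, ∅, true, ∅⟩_n` where the goal `G` contains only constraints of
the forms `a(X̄)` and `del(a(X̄))` (no `a_r` constraints). -/
def Init (χ : CState α) : Prop :=
  (∀ c ∈ χ.goal, ∃ a, c = TC.raw a ∨ c = TC.rawDel a) ∧ χ.store = ∅ ∧ χ.hist = ∅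

/-- Reachability (w.r.t. ω_p and program `T(P)`) from an initial state. -/
def Reachable (P : Set (Inst α)) (χ : CState α) : Prop :=
  ∃ χ₀, Init χ₀ ∧ Relation.ReflTransGen (StepAny P) χ₀ χ

/-- Pre-normal form: empty goal, the store contains only `a_r(X̄, M)` constraints, and
two stored representations of the same atom have the same identifier. -/
def PreNormal (χ : CState α) : Prop :=
  χ.goal = 0 ∧ (∀ c ∈ χ.store, ∃ a m, c.1 = TC.rep a m) ∧
  ∀ a m₁ m₂ i₁ i₂, (TC.rep a m₁, i₁) ∈ χ.store → (TC.rep a m₂, i₂) ∈ χ.store → i₁ = i₂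

/-- A rule instance is implied in a state `σ` if its conclusion is contained in
`chrToLa σ`. -/
def Implied (ι : Inst α) (χ : CState α) : Prop := ↑ι.concl ⊆ chrToLa χ

end LA2CHR

/-!
Under `chrToLa` each CHR constraint stands for one or two LA assertions (`TC.view`), and
`chrToLa σ` is the union of these over goal and store. `Introduce` and the update rules of
priority 1 and 2 only trade constraints for others standing for the same assertions, so they
leave `chrToLa` unchanged; a translated rule adds exactly its conclusion.

It remains to see that a translated rule firing on a non-implied instance `ι` of priority `p`
is an LA `Apply` step. Reachable states satisfy an invariant: every atom has at most one
representation in the store, and the history blocks nothing that matters. Since no rule of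
priority 1 may fire, `ι`'s antecedents hold in `chrToLa σ`; if moreover `p > 0`, no rule of
priority at most 2 may fire, so the store holds representations only. Then every LA instance
applicable in `chrToLa σ` has a fireable translation, whose priority is therefore at least
`p + 2`.
-/

namespace LA2CHR

variable {α : Type}

def TC.view : TC α → Set (LAAtom α)
  | .raw a => {.pos a}
  | .rawDel a => {.del a}
  | .rep a .p => {.pos a}
  | .rep a .n => {.del a}
  | .rep a .b => {.pos a, .del a}

lemma mem_chrToLa {χ : CState α} {x : LAAtom α} :
    x ∈ chrToLa χ ↔ ∃ c, memA χ c ∧ x ∈ c.view := by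
  constructor
  · rintro (⟨a, rfl, h | ⟨m, hm, h⟩⟩ | ⟨a, rfl, h | ⟨m, hm, h⟩⟩)
    · exact ⟨_, h, rfl⟩
    · exact ⟨_, h, by cases m <;> simp_all [TC.view]⟩
    · exact ⟨_, h, rfl⟩
    · exact ⟨_, h, by cases m <;> simp_all [TC.view]⟩
  · rintro ⟨c | c | ⟨c, m⟩, h, hx⟩
    · exact Or.inl ⟨c, by simpa [TC.view] using hx, Or.inl h⟩
    · exact Or.inr ⟨c, by simpa [TC.view] using hx, Or.inl h⟩
    · cases m <;> simp only [TC.view, Set.mem_insert_iff, Set.mem_singleton_iff] at hx <;>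
        rcases hx with rfl | rfl <;> simp only [chrToLa, Set.mem_ofPred_eq] <;> grind

lemma view_subset_chrToLa_of_mem_goal {χ : CState α} {c : TC α} (h : c ∈ χ.goal) :
    c.view ⊆ chrToLa χ :=
  fun _ hx => mem_chrToLa.2 ⟨c, Or.inl h, hx⟩

lemma view_subset_chrToLa_of_mem_store {χ : CState α} {c : TC α} {i : ℕ}
    (h : (c, i) ∈ χ.store) : c.view ⊆ chrToLa χ :=
  fun _ hx => mem_chrToLa.2 ⟨c, Or.inr ⟨i, h⟩, hx⟩

lemma view_toTC (x : LAAtom α) : (toTC x).view = {x} := by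
  cases x <;> rfl

lemma view_raw_subset {a : α} {m : Mode} (hm : m ≠ .n) :
    (TC.raw a).view ⊆ (TC.rep a m).view := by
  cases m <;> simp_all [TC.view]

lemma view_rawDel_subset {a : α} {m : Mode} (hm : m ≠ .p) :
    (TC.rawDel a).view ⊆ (TC.rep a m).view := by
  cases m <;> simp_all [TC.view]

lemma view_rep_subset_b (a : α) (m : Mode) : (TC.rep a m).view ⊆ (TC.rep a .b).view := by
  cases m <;> simp [TC.view]

lemma chrToLa_mk_sdiff {χ : CState α} (hg : χ.goal = 0) {B : Multiset (TC α)}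
    {R : Set (TC α × ℕ)} {T : Set (RuleTag α × Set (TC α × ℕ))} {n : ℕ}
    (hR : ∀ p ∈ R, p ∈ χ.store → p.1.view ⊆ chrToLa ⟨B, χ.store \ R, T, n⟩) :
    chrToLa ⟨B, χ.store \ R, T, n⟩ = chrToLa χ ∪ ⋃ b ∈ B, b.view := by
  apply Set.Subset.antisymm
  · intro x hx
    obtain ⟨c, hc | ⟨i, hi, -⟩, hx⟩ := mem_chrToLa.1 hx
    · exact Or.inr (Set.mem_biUnion hc hx)
    · exact Or.inl (mem_chrToLa.2 ⟨c, Or.inr ⟨i, hi⟩, hx⟩)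
  · rintro x (hx | hx)
    · obtain ⟨c, hc, hx⟩ := mem_chrToLa.1 hx
      simp only [memA, hg, Multiset.notMem_zero, false_or] at hc
      obtain ⟨i, hi⟩ := hc
      by_cases hR' : (c, i) ∈ R
      · exact hR _ hR' hi hx
      · exact mem_chrToLa.2 ⟨c, Or.inr ⟨i, hi, hR'⟩, hx⟩
    · obtain ⟨b, hb, hx⟩ := Set.mem_iUnion₂.1 hx
      exact mem_chrToLa.2 ⟨b, Or.inl hb, hx⟩

lemma chrToLa_mk_sdiff_eq {χ : CState α} (hg : χ.goal = 0) {B : Multiset (TC α)}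
    {R : Set (TC α × ℕ)} {T : Set (RuleTag α × Set (TC α × ℕ))} {n : ℕ}
    (hR : ∀ p ∈ R, p ∈ χ.store → p.1.view ⊆ chrToLa ⟨B, χ.store \ R, T, n⟩)
    (hB : ∀ b ∈ B, b.view ⊆ chrToLa χ) :
    chrToLa ⟨B, χ.store \ R, T, n⟩ = chrToLa χ := by
  rw [chrToLa_mk_sdiff hg hR, Set.union_eq_left]
  exact Set.iUnion₂_subset hB

def RuleTag.concl : RuleTag α → Set (LAAtom α)
  | .inst ι => ι.concl
  | _ => ∅

lemma Fires.chrToLa_apply {P : Set (Inst α)} {χ : CState α} {t : RuleTag α}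
    {H R : Set (TC α × ℕ)} {B : Multiset (TC α)} (hf : Fires P χ t H R B) (hg : χ.goal = 0)
    (T : Set (RuleTag α × Set (TC α × ℕ))) (n : ℕ) :
    chrToLa ⟨B, χ.store \ R, T, n⟩ = chrToLa χ ∪ t.concl := by
  cases hf with
  | inst ι fp fn fm hP hpos hneg =>
    rw [chrToLa_mk_sdiff hg (by simp)]
    ext
    simp [RuleTag.concl, view_toTC]
  | keepPos a m i j hm h₁ h₂ =>
    refine (chrToLa_mk_sdiff_eq hg ?_ (by simp)).trans (Set.union_empty _).symm
    rintro _ rfl -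
    exact (view_raw_subset hm).trans
      (view_subset_chrToLa_of_mem_store (i := i) ⟨h₁, by simp⟩)
  | keepNeg a m i j hm h₁ h₂ =>
    refine (chrToLa_mk_sdiff_eq hg ?_ (by simp)).trans (Set.union_empty _).symm
    rintro _ rfl -
    exact (view_rawDel_subset hm).trans
      (view_subset_chrToLa_of_mem_store (i := i) ⟨h₁, by simp⟩)
  | mergePos a i j h₁ h₂ =>
    refine (chrToLa_mk_sdiff_eq hg ?_ ?_).trans (Set.union_empty _).symm
    · rintro _ (rfl | rfl) - <;>
        refine .trans ?_ (view_subset_chrToLa_of_mem_goal (Multiset.mem_singleton_self _))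
      exacts [view_rep_subset_b a _, view_raw_subset nofun]
    · simp only [Multiset.mem_singleton, forall_eq]
      exact Set.insert_subset (view_subset_chrToLa_of_mem_store h₂ rfl)
        (view_subset_chrToLa_of_mem_store h₁)
  | mergeNeg a i j h₁ h₂ =>
    refine (chrToLa_mk_sdiff_eq hg ?_ ?_).trans (Set.union_empty _).symm
    · rintro _ (rfl | rfl) - <;>
        refine .trans ?_ (view_subset_chrToLa_of_mem_goal (Multiset.mem_singleton_self _))
      exacts [view_rep_subset_b a _, view_rawDel_subset nofun]
    · simp only [Multiset.mem_singleton, forall_eq]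
      exact Set.insert_subset (view_subset_chrToLa_of_mem_store h₁ rfl)
        (view_subset_chrToLa_of_mem_store h₂)
  | newPos a j h₂ =>
    refine (chrToLa_mk_sdiff_eq hg ?_ ?_).trans (Set.union_empty _).symm
    · rintro _ rfl -
      exact view_subset_chrToLa_of_mem_goal (c := TC.rep a .p) (Multiset.mem_singleton_self _)
    · simp only [Multiset.mem_singleton, forall_eq]
      exact view_subset_chrToLa_of_mem_store (c := TC.raw a) h₂
  | newNeg a j h₂ =>
    refine (chrToLa_mk_sdiff_eq hg ?_ ?_).trans (Set.union_empty _).symm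
    · rintro _ rfl -
      exact view_subset_chrToLa_of_mem_goal (c := TC.rep a .n) (Multiset.mem_singleton_self _)
    · simp only [Multiset.mem_singleton, forall_eq]
      exact view_subset_chrToLa_of_mem_store (c := TC.rawDel a) h₂

/-- Why the propagation history never blocks a relevant firing: a recorded update rule has
removed one of its heads, and a recorded translated LA rule has its conclusion implied. -/
def HistEntryOK (χ : CState α) : RuleTag α → Set (TC α × ℕ) → Prop
  | .inst ι, _ => Implied ι χ
  | _, H => ¬ H ⊆ χ.store

structure Invariant (χ : CState α) : Prop where
  store_lt : ∀ p ∈ χ.store, p.2 < χ.next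
  hist_lt : ∀ t H, (t, H) ∈ χ.hist → ∀ p ∈ H, p.2 < χ.next
  hist_ok : ∀ t H, (t, H) ∈ χ.hist → HistEntryOK χ t H
  rep_unique : ∀ a m m' i i', (TC.rep a m, i) ∈ χ.store → (TC.rep a m', i') ∈ χ.store →
    m = m' ∧ i = i'
  goal_rep : ∀ a m, TC.rep a m ∈ χ.goal →
    χ.goal = {TC.rep a m} ∧ ∀ m' i, (TC.rep a m', i) ∉ χ.store

lemma HistEntryOK.mono {χ χ' : CState α} {t : RuleTag α} {H : Set (TC α × ℕ)}
    (h : HistEntryOK χ t H) (hs : ∀ p ∈ H, p ∈ χ'.store → p ∈ χ.store)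
    (hc : chrToLa χ ⊆ chrToLa χ') : HistEntryOK χ' t H := by
  cases t with
  | inst ι => exact Set.Subset.trans h hc
  | _ => exact fun hH => h fun p hp => hs p hp (hH hp)

lemma Fires.subset_store {P : Set (Inst α)} {χ : CState α} {t : RuleTag α}
    {H R : Set (TC α × ℕ)} {B : Multiset (TC α)} (hf : Fires P χ t H R B) :
    H ⊆ χ.store := by
  cases hf with
  | inst ι fp fn fm hP hpos hneg =>
    rintro _ (⟨a, ha, rfl⟩ | ⟨a, ha, rfl⟩)
    exacts [hpos a ha, (hneg a ha).2]
  | _ => simp_all [Set.insert_subset_iff]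

lemma Invariant.notMem_hist {P : Set (Inst α)} {χ : CState α} (hχ : Invariant χ)
    {t : RuleTag α} {H R : Set (TC α × ℕ)} {B : Multiset (TC α)} (hf : Fires P χ t H R B)
    (himp : ∀ ι, t = .inst ι → ¬ Implied ι χ) : (t, H) ∉ χ.hist := by
  intro ht
  have hok := hχ.hist_ok t H ht
  cases t with
  | inst ι => exact himp ι rfl hok
  | _ => exact hok hf.subset_store

/-- An ω_p `Apply` transition firing `t` requires exactly `PrioLowerBound P χ t.prio`. -/
def PrioLowerBound (P : Set (Inst α)) (χ : CState α) (k : ℕ) : Prop :=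
  ∀ t H R B, Fires P χ t H R B → (t, H) ∉ χ.hist → k ≤ t.prio

section PrioLowerBound

variable {P : Set (Inst α)} {χ : CState α} {k : ℕ} {a : α} {m : Mode} {i j : ℕ}

lemma PrioLowerBound.le_of_fires (hk : PrioLowerBound P χ k) (hχ : Invariant χ)
    {t : RuleTag α} {H R : Set (TC α × ℕ)} {B : Multiset (TC α)} (hf : Fires P χ t H R B)
    (himp : ∀ ι, t = .inst ι → ¬ Implied ι χ) : k ≤ t.prio :=
  hk t H R B hf (hχ.notMem_hist hf himp)

lemma PrioLowerBound.le_one_of_raw (hk : PrioLowerBound P χ k) (hχ : Invariant χ)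
    (hrep : (TC.rep a m, i) ∈ χ.store) (hraw : (TC.raw a, j) ∈ χ.store) : k ≤ 1 := by
  by_cases hm : m = .n
  · subst hm
    exact hk.le_of_fires hχ (.mergePos a i j hrep hraw) nofun
  · exact hk.le_of_fires hχ (.keepPos a m i j hm hrep hraw) nofun

lemma PrioLowerBound.le_one_of_rawDel (hk : PrioLowerBound P χ k) (hχ : Invariant χ)
    (hrep : (TC.rep a m, i) ∈ χ.store) (hraw : (TC.rawDel a, j) ∈ χ.store) : k ≤ 1 := by
  by_cases hm : m = .p
  · subst hm
    exact hk.le_of_fires hχ (.mergeNeg a i j hrep hraw) nofun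
  · exact hk.le_of_fires hχ (.keepNeg a m i j hm hrep hraw) nofun

lemma PrioLowerBound.le_two_of_raw (hk : PrioLowerBound P χ k) (hχ : Invariant χ)
    (hraw : (TC.raw a, j) ∈ χ.store) : k ≤ 2 :=
  hk.le_of_fires hχ (.newPos a j hraw) nofun

lemma PrioLowerBound.le_two_of_rawDel (hk : PrioLowerBound P χ k) (hχ : Invariant χ)
    (hraw : (TC.rawDel a, j) ∈ χ.store) : k ≤ 2 :=
  hk.le_of_fires hχ (.newNeg a j hraw) nofun

end PrioLowerBound

section LAStep

variable {P : Set (Inst α)} {χ : CState α} {a : α}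

lemma pos_mem_chrToLa_iff (hg : χ.goal = 0) :
    LAAtom.pos a ∈ chrToLa χ ↔
      (∃ j, (TC.raw a, j) ∈ χ.store) ∨ ∃ m i, m ≠ .n ∧ (TC.rep a m, i) ∈ χ.store := by
  simp [chrToLa, memA, hg]

lemma del_mem_chrToLa_iff (hg : χ.goal = 0) :
    LAAtom.del a ∈ chrToLa χ ↔
      (∃ j, (TC.rawDel a, j) ∈ χ.store) ∨ ∃ m i, m ≠ .p ∧ (TC.rep a m, i) ∈ χ.store := by
  simp [chrToLa, memA, hg]

lemma laApplicable_of_fires_inst (hχ : Invariant χ) (hg : χ.goal = 0) {ι : Inst α}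
    (hk : PrioLowerBound P χ (ι.prio + 2)) (hP : ι ∈ P) {fp fn : α → ℕ} {fm : α → Mode}
    (hpos : ∀ a ∈ ι.posA, (TC.rep a .p, fp a) ∈ χ.store)
    (hneg : ∀ a ∈ ι.negA, fm a ≠ .p ∧ (TC.rep a (fm a), fn a) ∈ χ.store)
    (himp : ¬ Implied ι χ) : LAApplicable P (chrToLa χ) ι := by
  refine ⟨hP, fun a ha => ⟨?_, ?_⟩, fun a ha => ?_, himp⟩
  · exact view_subset_chrToLa_of_mem_store (c := TC.rep a .p) (hpos a ha) rfl
  · rw [del_mem_chrToLa_iff hg]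
    rintro (⟨j, hj⟩ | ⟨m, i, hm, hi⟩)
    · have := hk.le_one_of_rawDel hχ (hpos a ha) hj
      omega
    · exact hm (hχ.rep_unique a _ _ _ _ (hpos a ha) hi).1.symm
  · exact view_subset_chrToLa_of_mem_store (hneg a ha).2
      (view_rawDel_subset (hneg a ha).1 (Set.mem_singleton _))

lemma PrioLowerBound.le_prio_add_two {k : ℕ} (hk : PrioLowerBound P χ k) (hχ : Invariant χ)
    (hg : χ.goal = 0) (hk2 : 2 < k) {ι : Inst α} (h : LAApplicable P (chrToLa χ) ι) :
    k ≤ ι.prio + 2 := by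
  obtain ⟨hP, hpos, hneg, himp⟩ := h
  have hraw : ∀ a j, (TC.raw a, j) ∉ χ.store := fun a j h => by
    have := hk.le_two_of_raw hχ h
    omega
  have hrawDel : ∀ a j, (TC.rawDel a, j) ∉ χ.store := fun a j h => by
    have := hk.le_two_of_rawDel hχ h
    omega
  have hp : ∀ a ∈ ι.posA, ∃ i, (TC.rep a .p, i) ∈ χ.store := by
    intro a ha
    obtain ⟨hpa, hda⟩ := hpos a ha
    rw [pos_mem_chrToLa_iff hg] at hpa
    rw [del_mem_chrToLa_iff hg] at hda
    rcases hpa with ⟨j, hj⟩ | ⟨m, i, hm, hi⟩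
    · exact absurd hj (hraw a j)
    · cases m
      · exact ⟨i, hi⟩
      · exact absurd rfl hm
      · exact absurd (Or.inr ⟨.b, i, nofun, hi⟩) hda
  have hn : ∀ a ∈ ι.negA, ∃ m i, m ≠ .p ∧ (TC.rep a m, i) ∈ χ.store := by
    intro a ha
    rcases (del_mem_chrToLa_iff hg).1 (hneg a ha) with ⟨j, hj⟩ | h
    · exact absurd hj (hrawDel a j)
    · exact h
  have : Nonempty Mode := ⟨.p⟩
  choose! fp hfp using hp
  choose! fm fn hfmn using hn
  exact hk.le_of_fires hχ (.inst ι fp fn fm hP hfp hfmn) fun _ h => by cases h; exact himp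

lemma laStep_of_fires_inst (hχ : Invariant χ) (hg : χ.goal = 0) {ι : Inst α}
    (hk : PrioLowerBound P χ (ι.prio + 2)) (hP : ι ∈ P) {fp fn : α → ℕ} {fm : α → Mode}
    (hpos : ∀ a ∈ ι.posA, (TC.rep a .p, fp a) ∈ χ.store)
    (hneg : ∀ a ∈ ι.negA, fm a ≠ .p ∧ (TC.rep a (fm a), fn a) ∈ χ.store)
    (himp : ¬ Implied ι χ) : LAStep P (chrToLa χ) (chrToLa χ ∪ ι.concl) := by
  refine ⟨ι, laApplicable_of_fires_inst hχ hg hk hP hpos hneg himp, rfl, fun ι' h' => ?_⟩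
  rcases Nat.eq_zero_or_pos ι.prio with h0 | h0
  · omega
  · have := hk.le_prio_add_two hχ hg (by omega) h'
    omega

end LAStep

section Preservation

variable {P : Set (Inst α)} {χ : CState α} {t : RuleTag α} {H R : Set (TC α × ℕ)}
  {B : Multiset (TC α)} {T : Set (RuleTag α × Set (TC α × ℕ))} {n : ℕ}

lemma Fires.histEntryOK_apply (hf : Fires P χ t H R B) (hg : χ.goal = 0) :
    HistEntryOK ⟨B, χ.store \ R, T, n⟩ t H := by
  cases hf with
  | inst ι fp fn fm hP hpos hneg =>
    show Implied ι _
    rw [Implied, (Fires.inst ι fp fn fm hP hpos hneg).chrToLa_apply hg]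
    exact Set.subset_union_right
  | keepPos | keepNeg => exact fun h => (h (Or.inr rfl)).2 rfl
  | mergePos | mergeNeg => exact fun h => (h (Or.inl rfl)).2 (Or.inl rfl)
  | newPos | newNeg => exact fun h => (h rfl).2 rfl

lemma rep_notMem_map_toTC {s : Finset (LAAtom α)} {a : α} {m : Mode} :
    TC.rep a m ∉ Multiset.map toTC s.val := by
  simp only [Multiset.mem_map, not_exists, not_and]
  rintro (_ | _) _ ⟨⟩

lemma Fires.goal_rep (hf : Fires P χ t H R B) (hχ : Invariant χ)
    (hk : PrioLowerBound P χ t.prio) {a : α} {m : Mode} (hm : TC.rep a m ∈ B) :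
    B = {TC.rep a m} ∧ ∀ m' i, (TC.rep a m', i) ∉ χ.store \ R := by
  cases hf with
  | inst ι fp fn fm hP hpos hneg => exact absurd hm rep_notMem_map_toTC
  | keepPos | keepNeg => simp at hm
  | mergePos a' i j h₁ h₂ | mergeNeg a' i j h₁ h₂ =>
    obtain ⟨rfl, rfl⟩ := TC.rep.inj (Multiset.mem_singleton.1 hm)
    refine ⟨rfl, fun m' i' h => h.2 ?_⟩
    obtain ⟨rfl, rfl⟩ := hχ.rep_unique a _ _ _ _ h.1 h₁
    simp
  | newPos a' j h₂ =>
    obtain ⟨rfl, rfl⟩ := TC.rep.inj (Multiset.mem_singleton.1 hm)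
    exact ⟨rfl, fun m' i h => absurd (hk.le_one_of_raw hχ h.1 h₂) (by simp [RuleTag.prio])⟩
  | newNeg a' j h₂ =>
    obtain ⟨rfl, rfl⟩ := TC.rep.inj (Multiset.mem_singleton.1 hm)
    exact ⟨rfl, fun m' i h => absurd (hk.le_one_of_rawDel hχ h.1 h₂) (by simp [RuleTag.prio])⟩

lemma Invariant.apply (hχ : Invariant χ) (hg : χ.goal = 0) (hf : Fires P χ t H R B)
    (hk : PrioLowerBound P χ t.prio) :
    Invariant ⟨B, χ.store \ R, insert (t, H) χ.hist, χ.next⟩ where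
  store_lt p hp := hχ.store_lt p hp.1
  hist_lt := by
    rintro t' H' (h | h)
    · obtain ⟨rfl, rfl⟩ := Prod.mk.inj h
      exact fun p hp => hχ.store_lt p (hf.subset_store hp)
    · exact hχ.hist_lt t' H' h
  hist_ok := by
    rintro t' H' (h | h)
    · obtain ⟨rfl, rfl⟩ := Prod.mk.inj h
      exact hf.histEntryOK_apply hg
    · refine (hχ.hist_ok t' H' h).mono (fun p _ hp => hp.1) ?_
      rw [hf.chrToLa_apply hg]
      exact Set.subset_union_left
  rep_unique a m m' i i' h h' := hχ.rep_unique a m m' i i' h.1 h'.1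
  goal_rep a m hm := hf.goal_rep hχ hk hm

lemma Invariant.of_init (h : Init χ) : Invariant χ := by
  obtain ⟨hg, hs, hh⟩ := h
  refine ⟨by simp [hs], by simp [hh], by simp [hh], by simp [hs], fun a m hm => ?_⟩
  obtain ⟨b, hb | hb⟩ := hg _ hm <;> cases hb

end Preservation

section Reachable

variable [DecidableEq α] {P : Set (Inst α)} {χ : CState α}

lemma chrToLa_intro {c : TC α} (hc : c ∈ χ.goal) :
    chrToLa ⟨χ.goal.erase c, insert (c, χ.next) χ.store, χ.hist, χ.next + 1⟩ =
      chrToLa χ := by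
  have h : ∀ d,
      memA ⟨χ.goal.erase c, insert (c, χ.next) χ.store, χ.hist, χ.next + 1⟩ d ↔ memA χ d := by
    intro d
    by_cases hd : d = c
    · subst hd
      exact ⟨fun _ => Or.inl hc, fun _ => Or.inr ⟨_, Set.mem_insert _ _⟩⟩
    · simp [memA, Multiset.mem_erase_of_ne hd, hd]
  ext x
  simp only [mem_chrToLa, h]

lemma Invariant.intro (hχ : Invariant χ) {c : TC α} (hc : c ∈ χ.goal) :
    Invariant ⟨χ.goal.erase c, insert (c, χ.next) χ.store, χ.hist, χ.next + 1⟩ where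
  store_lt := by
    rintro p (rfl | hp)
    · exact Nat.lt_succ_self _
    · exact Nat.lt_succ_of_lt (hχ.store_lt p hp)
  hist_lt t H ht p hp := Nat.lt_succ_of_lt (hχ.hist_lt t H ht p hp)
  hist_ok t H ht := by
    refine (hχ.hist_ok t H ht).mono ?_ (chrToLa_intro hc).ge
    rintro p hp (rfl | hp')
    · exact absurd (hχ.hist_lt t H ht _ hp) (lt_irrefl _)
    · exact hp'
  rep_unique := by
    rintro a m m' i i' (h | h) (h' | h')
    · obtain ⟨e, rfl⟩ := Prod.mk.inj h
      obtain ⟨e', rfl⟩ := Prod.mk.inj h'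
      exact ⟨(TC.rep.inj (e.trans e'.symm)).2, rfl⟩
    · obtain ⟨rfl, -⟩ := Prod.mk.inj h
      exact absurd h' ((hχ.goal_rep a m hc).2 m' i')
    · obtain ⟨rfl, -⟩ := Prod.mk.inj h'
      exact absurd h ((hχ.goal_rep a m' hc).2 m i)
    · exact hχ.rep_unique a m m' i i' h h'
  goal_rep a m hm := by
    have hg := (hχ.goal_rep a m (Multiset.mem_of_mem_erase hm)).1
    rw [hg, Multiset.mem_singleton] at hc
    rw [hg, hc, Multiset.erase_singleton] at hm
    exact absurd hm (Multiset.notMem_zero _)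

lemma Invariant.step {χ' : CState α} {l : Lab α} (hχ : Invariant χ) (h : Step P χ l χ') :
    Invariant χ' := by
  cases h with
  | intro c hc => exact hχ.intro hc
  | apply t H R B hg hf _ hk => exact hχ.apply hg hf hk

lemma Reachable.invariant (h : Reachable P χ) : Invariant χ := by
  obtain ⟨χ₀, h₀, hsteps⟩ := h
  induction hsteps with
  | refl => exact .of_init h₀
  | tail _ hstep ih => exact ih.step hstep.choose_spec

end Reachable

end LA2CHR

open LA2CHR in
/-- For every reachable CHR^rp state `σ` of the translated program `T(P)`: if
`σ → σ'` under ω_p, then either `chrToLa σ = chrToLa σ'`, or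
`chrToLa σ → chrToLa σ'` is a Logical Algorithms transition of the original
program `P`. -/
theorem chr_step_corresponds_to_la_step {α : Type} [DecidableEq α]
    (P : Set (Inst α)) (χ χ' : CState α) (l : Lab α)
    (hreach : Reachable P χ) (hstep : Step P χ l χ') :
    chrToLa χ' = chrToLa χ ∨ LAStep P (chrToLa χ) (chrToLa χ') := by
  have hχ := hreach.invariant
  cases hstep with
  | intro c hc => exact Or.inl (chrToLa_intro hc)
  | apply t H R B hg hf _ hk =>
    rw [hf.chrToLa_apply hg]
    cases hf with
    | inst ι fp fn fm hP hpos hneg =>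
      by_cases himp : Implied ι χ
      · exact Or.inl (Set.union_eq_left.2 himp)
      · exact Or.inr (laStep_of_fires_inst hχ hg hk hP hpos hneg himp)
    | _ => exact Or.inl (Set.union_empty _)
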